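/- arXiv:2208.03625 — 4 statements merged into one kernel-verified Lean document; each statement's English description precedes it below -/
import Mathlib

section
/- Let F ⊆ ℝ^{n×m} be a nonempty closed set, q₀(Y) = tr(Yᵀ A₀ Y) + 2 tr(B₀ᵀ Y) + c₀ a quadratic function, Ŷ ∈ ℝ^{n×m}, and η > ‖A₀‖₂. Let d_F(Ŷ) = min{‖Y − Ŷ‖_F : Y ∈ F}. Then any minimizer Y* of q₀(Y) + η ‖Y − Ŷ‖_F² over F satisfies 0 ≤ ‖Y* − Ŷ‖_F − d_F(Ŷ) ≤ (‖A₀‖₂ d_F(Ŷ) + ‖∇q₀(Ŷ)‖_F) / (η − ‖A₀‖₂). -/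
open Matrix Finset

/-- Frobenius norm of a real matrix. -/
noncomputable def frob {n m : ℕ} (M : Matrix (Fin n) (Fin m) ℝ) : ℝ :=
  Real.sqrt (∑ i, ∑ j, (M i j) ^ 2)

/-- Spectral (operator) norm of a square real matrix. -/
noncomputable def spec {n : ℕ} (A : Matrix (Fin n) (Fin n) ℝ) : ℝ :=
  ‖Matrix.toEuclideanCLM (𝕜 := ℝ) A‖

/-- Euclidean norm of a finitely-indexed real vector. -/
noncomputable def euc {ι : Type*} [Fintype ι] (x : ι → ℝ) : ℝ :=
  Real.sqrt (∑ i, (x i) ^ 2)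

/-- The quadratic function q(Y) = tr(Yᵀ A Y) + 2 tr(Bᵀ Y) + c. -/
noncomputable def quadF {n m : ℕ} (A : Matrix (Fin n) (Fin n) ℝ)
    (B : Matrix (Fin n) (Fin m) ℝ) (c : ℝ) (Y : Matrix (Fin n) (Fin m) ℝ) : ℝ :=
  (Yᵀ * A * Y).trace + 2 * (Bᵀ * Y).trace + c

/-- The gradient ∇q(Y) = 2(AY + B). -/
noncomputable def gradF {n m : ℕ} (A : Matrix (Fin n) (Fin n) ℝ)
    (B Y : Matrix (Fin n) (Fin m) ℝ) : Matrix (Fin n) (Fin m) ℝ :=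
  (2 : ℝ) • (A * Y + B)

/-- Frobenius distance from a point to a set of matrices. -/
noncomputable def distF {n m : ℕ} (F : Set (Matrix (Fin n) (Fin m) ℝ))
    (Z : Matrix (Fin n) (Fin m) ℝ) : ℝ :=
  sInf ((fun Y => frob (Y - Z)) '' F)

/-- Smallest singular value: σ_min(J) = inf{‖Jᵀξ‖₂ : ‖ξ‖₂ = 1}. -/
noncomputable def sigMin {ι κ : Type*} [Fintype ι] [Fintype κ] (J : Matrix ι κ ℝ) : ℝ :=
  sInf {r | ∃ ξ : ι → ℝ, euc ξ = 1 ∧ r = euc (J.transpose.mulVec ξ)}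

/-- Spectral norm of a rectangular matrix: sup{‖Jx‖₂ : ‖x‖₂ = 1}. -/
noncomputable def specR {ι κ : Type*} [Fintype ι] [Fintype κ] (J : Matrix ι κ ℝ) : ℝ :=
  sSup {r | ∃ x : κ → ℝ, euc x = 1 ∧ r = euc (J.mulVec x)}

/-- Maximum absolute row-sum norm ‖M‖₁. -/
noncomputable def rowNorm {n : ℕ} (A : Matrix (Fin n) (Fin n) ℝ) : ℝ :=
  ⨆ i, ∑ j, |A i j|

/-! Expanding `q₀` around `Ŷ` gives `|q₀ Y - q₀ Ŷ| ≤ ‖∇q₀ Ŷ‖ ‖Y - Ŷ‖ + ‖A₀‖₂ ‖Y - Ŷ‖²`.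
Comparing the proximal objective at `Y*` with its value at any `Y ∈ F` then yields
`(η - ‖A₀‖₂) r - ‖∇q₀ Ŷ‖ ≤ η t` for `r = ‖Y* - Ŷ‖` and `t = ‖Y - Ŷ‖`. This bound is linear in `t`,
so it survives taking the infimum over `Y ∈ F`, i.e. it holds for `t = d_F Ŷ`, and rearranges to
the claim. -/

lemma linear_bound_of_quadratic_bound {η s g r t : ℝ} (hη : 0 ≤ η) (hs : 0 ≤ s) (hg : 0 ≤ g)
    (hr : 0 ≤ r) (ht : 0 ≤ t) (h : (η - s) * r ^ 2 - g * r ≤ (η + s) * t ^ 2 + g * t) :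
    (η - s) * r - g ≤ η * t := by
  rcases le_or_gt r t with hrt | htr
  · nlinarith [mul_nonneg hs hr, mul_nonneg hη (sub_nonneg.2 hrt)]
  · -- for `t < r`, divide `(η - s) (r² - t²) ≤ g (r + t) + 2 s t² ≤ (g + s t) (r + t)` by `r + t`
    by_contra! hlt
    nlinarith [mul_lt_mul_of_pos_right hlt (by linarith : 0 < r + t),
      mul_nonneg (mul_nonneg hs ht) (sub_nonneg.2 htr.le)]

lemma abs_sum_mul_le_sqrt_mul_sqrt {ι : Type*} (s : Finset ι) (f g : ι → ℝ) :
    |∑ i ∈ s, f i * g i| ≤ √(∑ i ∈ s, f i ^ 2) * √(∑ i ∈ s, g i ^ 2) := by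
  refine abs_le.2 ⟨?_, Real.sum_mul_le_sqrt_mul_sqrt s f g⟩
  have h := Real.sum_mul_le_sqrt_mul_sqrt s (fun i => -f i) g
  simp only [neg_mul, Finset.sum_neg_distrib, neg_sq] at h
  linarith

section Frobenius

variable {n m : ℕ}

lemma frob_nonneg (M : Matrix (Fin n) (Fin m) ℝ) : 0 ≤ frob M :=
  Real.sqrt_nonneg _

lemma frob_sq (M : Matrix (Fin n) (Fin m) ℝ) : frob M ^ 2 = ∑ i, ∑ j, M i j ^ 2 :=
  Real.sq_sqrt (sum_nonneg fun _ _ => sum_nonneg fun _ _ => sq_nonneg _)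

lemma spec_nonneg (A : Matrix (Fin n) (Fin n) ℝ) : 0 ≤ spec A :=
  norm_nonneg _

lemma trace_transpose_mul_eq_sum (M N : Matrix (Fin n) (Fin m) ℝ) :
    (Mᵀ * N).trace = ∑ i, ∑ j, M i j * N i j := by
  simp only [trace, Matrix.diag, mul_apply, transpose_apply]
  exact sum_comm

lemma abs_trace_transpose_mul_le (M N : Matrix (Fin n) (Fin m) ℝ) :
    |(Mᵀ * N).trace| ≤ frob M * frob N := by
  rw [trace_transpose_mul_eq_sum, frob, frob, ← Fintype.sum_prod_type',
    ← Fintype.sum_prod_type', ← Fintype.sum_prod_type']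
  exact abs_sum_mul_le_sqrt_mul_sqrt _ _ _

lemma abs_dotProduct_mulVec_le (A : Matrix (Fin n) (Fin n) ℝ) (x : Fin n → ℝ) :
    |x ⬝ᵥ A *ᵥ x| ≤ spec A * ∑ i, x i ^ 2 := by
  have hnorm : ‖(WithLp.toLp 2 x : EuclideanSpace ℝ (Fin n))‖ ^ 2 = ∑ i, x i ^ 2 := by
    simp only [EuclideanSpace.norm_sq_eq, Real.norm_eq_abs, sq_abs]
  calc |x ⬝ᵥ A *ᵥ x|
      = |inner ℝ (WithLp.toLp 2 x) (toEuclideanCLM (𝕜 := ℝ) A (WithLp.toLp 2 x))| := by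
        rw [inner_toEuclideanCLM]
    _ ≤ ‖WithLp.toLp 2 x‖ * ‖toEuclideanCLM (𝕜 := ℝ) A (WithLp.toLp 2 x)‖ :=
        abs_real_inner_le_norm _ _
    _ ≤ ‖WithLp.toLp 2 x‖ * (spec A * ‖WithLp.toLp 2 x‖) :=
        mul_le_mul_of_nonneg_left (ContinuousLinearMap.le_opNorm _ _) (norm_nonneg _)
    _ = spec A * ∑ i, x i ^ 2 := by rw [← hnorm]; ring

lemma abs_trace_transpose_mul_mul_le (A : Matrix (Fin n) (Fin n) ℝ)
    (H : Matrix (Fin n) (Fin m) ℝ) : |(Hᵀ * A * H).trace| ≤ spec A * frob H ^ 2 := by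
  have hcols : (Hᵀ * A * H).trace = ∑ j, Hᵀ j ⬝ᵥ A *ᵥ Hᵀ j := by
    rw [Matrix.mul_assoc]
    simp only [trace, Matrix.diag, mul_apply, mulVec, dotProduct, transpose_apply]
  calc |(Hᵀ * A * H).trace|
      ≤ ∑ j, |Hᵀ j ⬝ᵥ A *ᵥ Hᵀ j| := hcols ▸ abs_sum_le_sum_abs _ _
    _ ≤ ∑ j, spec A * ∑ i, H i j ^ 2 := sum_le_sum fun j _ => abs_dotProduct_mulVec_le A _
    _ = spec A * frob H ^ 2 := by rw [← mul_sum, frob_sq, sum_comm]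

lemma quadF_eq_add_trace (A : Matrix (Fin n) (Fin n) ℝ) (hA : A.IsSymm)
    (B : Matrix (Fin n) (Fin m) ℝ) (c : ℝ) (Y Z : Matrix (Fin n) (Fin m) ℝ) :
    quadF A B c Y = quadF A B c Z + ((gradF A B Z)ᵀ * (Y - Z)).trace
      + ((Y - Z)ᵀ * A * (Y - Z)).trace := by
  have hswap : ((Yᵀ * (A * Z)).trace) = (Zᵀ * (A * Y)).trace := by
    rw [← trace_transpose (Zᵀ * (A * Y))]
    simp only [transpose_mul, transpose_transpose, hA.eq, Matrix.mul_assoc]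
  simp only [quadF, gradF, transpose_smul, smul_mul, trace_smul, smul_eq_mul, transpose_add,
    transpose_sub, Matrix.add_mul, Matrix.sub_mul, Matrix.mul_sub, trace_add,
    trace_sub, transpose_mul, hA.eq, Matrix.mul_assoc]
  linarith

lemma abs_quadF_sub_le (A : Matrix (Fin n) (Fin n) ℝ) (hA : A.IsSymm)
    (B : Matrix (Fin n) (Fin m) ℝ) (c : ℝ) (Y Z : Matrix (Fin n) (Fin m) ℝ) :
    |quadF A B c Y - quadF A B c Z| ≤
      frob (gradF A B Z) * frob (Y - Z) + spec A * frob (Y - Z) ^ 2 := by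
  rw [quadF_eq_add_trace A hA B c Y Z, add_assoc, add_sub_cancel_left]
  exact (abs_add_le _ _).trans
    (add_le_add (abs_trace_transpose_mul_le _ _) (abs_trace_transpose_mul_mul_le _ _))

lemma distF_le_frob {F : Set (Matrix (Fin n) (Fin m) ℝ)} (Z : Matrix (Fin n) (Fin m) ℝ)
    {Y : Matrix (Fin n) (Fin m) ℝ} (hY : Y ∈ F) : distF F Z ≤ frob (Y - Z) :=
  csInf_le ⟨0, Set.forall_mem_image.2 fun _ _ => frob_nonneg _⟩ (Set.mem_image_of_mem _ hY)

lemma le_distF {F : Set (Matrix (Fin n) (Fin m) ℝ)} (hF : F.Nonempty)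
    {Z : Matrix (Fin n) (Fin m) ℝ} {a : ℝ} (h : ∀ Y ∈ F, a ≤ frob (Y - Z)) : a ≤ distF F Z :=
  le_csInf (hF.image _) (Set.forall_mem_image.2 h)

lemma proximal_radius_le (A : Matrix (Fin n) (Fin n) ℝ) (hA : A.IsSymm)
    (B : Matrix (Fin n) (Fin m) ℝ) (c : ℝ) {η : ℝ} (hη : spec A ≤ η)
    (Z Yst Y : Matrix (Fin n) (Fin m) ℝ)
    (h : quadF A B c Yst + η * frob (Yst - Z) ^ 2 ≤ quadF A B c Y + η * frob (Y - Z) ^ 2) :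
    (η - spec A) * frob (Yst - Z) - frob (gradF A B Z) ≤ η * frob (Y - Z) := by
  have hs := spec_nonneg A
  have hst := abs_le.1 (abs_quadF_sub_le A hA B c Yst Z)
  have hY := abs_le.1 (abs_quadF_sub_le A hA B c Y Z)
  exact linear_bound_of_quadratic_bound (hs.trans hη) hs (frob_nonneg _) (frob_nonneg _)
    (frob_nonneg _) (by linarith [hst.1, hY.2])

end Frobenius

theorem proximal_minimizer_distance_bound_general {n m : ℕ}
    (F : Set (Matrix (Fin n) (Fin m) ℝ))
    (A₀ : Matrix (Fin n) (Fin n) ℝ) (hA₀ : A₀.IsSymm)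
    (B₀ : Matrix (Fin n) (Fin m) ℝ) (c₀ : ℝ)
    (Ych : Matrix (Fin n) (Fin m) ℝ) (η : ℝ) (hη : spec A₀ < η)
    (Yst : Matrix (Fin n) (Fin m) ℝ) (hYst : Yst ∈ F)
    (hmin : ∀ Y ∈ F, quadF A₀ B₀ c₀ Yst + η * (frob (Yst - Ych)) ^ 2 ≤
      quadF A₀ B₀ c₀ Y + η * (frob (Y - Ych)) ^ 2) :
    0 ≤ frob (Yst - Ych) - distF F Ych ∧
      frob (Yst - Ych) - distF F Ych ≤
        (spec A₀ * distF F Ych + frob (gradF A₀ B₀ Ych)) / (η - spec A₀) := by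
  have hη₀ : 0 < η := (spec_nonneg A₀).trans_lt hη
  have hdist : (η - spec A₀) * frob (Yst - Ych) - frob (gradF A₀ B₀ Ych) ≤ η * distF F Ych := by
    rw [← div_le_iff₀' hη₀]
    exact le_distF ⟨Yst, hYst⟩ fun Y hY =>
      (div_le_iff₀' hη₀).2 (proximal_radius_le A₀ hA₀ B₀ c₀ hη.le Ych Yst Y (hmin Y hY))
  refine ⟨sub_nonneg.2 (distF_le_frob Ych hYst), ?_⟩
  rw [le_div_iff₀ (sub_pos.2 hη)]
  linear_combination hdist

theorem proximal_minimizer_distance_bound {n m : ℕ}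
    (F : Set (Matrix (Fin n) (Fin m) ℝ)) (hFne : F.Nonempty) (hFcl : IsClosed F)
    (A₀ : Matrix (Fin n) (Fin n) ℝ) (hA₀ : A₀.IsSymm)
    (B₀ : Matrix (Fin n) (Fin m) ℝ) (c₀ : ℝ)
    (Ych : Matrix (Fin n) (Fin m) ℝ) (η : ℝ) (hη : spec A₀ < η)
    (Yst : Matrix (Fin n) (Fin m) ℝ) (hYst : Yst ∈ F)
    (hmin : ∀ Y ∈ F, quadF A₀ B₀ c₀ Yst + η * (frob (Yst - Ych)) ^ 2 ≤
      quadF A₀ B₀ c₀ Y + η * (frob (Y - Ych)) ^ 2) :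
    0 ≤ frob (Yst - Ych) - distF F Ych ∧
      frob (Yst - Ych) - distF F Ych ≤
        (spec A₀ * distF F Ych + frob (gradF A₀ B₀ Ych)) / (η - spec A₀) :=
  proximal_minimizer_distance_bound_general F A₀ hA₀ B₀ c₀ Ych η hη Yst hYst hmin
end

section
/- Let F ⊆ ℝ^{n×m} be a nonempty closed set and Ŷ ∈ ℝ^{n×m}. For any minimizer Y* of q₀(Y) + η ‖Y − Ŷ‖_F² over F with η > ‖A₀‖₂, writing Ȳ for a closest point of F to Ŷ (so ‖Ȳ − Ŷ‖_F = d_F(Ŷ)), one has q₀(Y*) ≤ q₀(Ŷ) + ‖∇q₀(Ŷ)‖_F d_F(Ŷ) + ‖A₀‖₂ d_F(Ŷ)² , i.e., the objective value of the penalized minimizer is bounded by the expanded function q̃₀(Ŷ) = q₀(Ŷ) + ‖∇q₀(Ŷ)‖_F d_F(Ŷ) + ‖A₀‖₂ d_F(Ŷ)². -/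
open Matrix Finset

/-! Since `Ybar` is a closest point of `F` to `Ych`, its penalty `η ‖Ybar - Ych‖²` is at most that
of `Yst`, so minimality of `Yst` gives `q₀ Yst ≤ q₀ Ybar`. Expanding `q₀` exactly to second order
around `Ych` (this uses the symmetry of `A₀`) and bounding the linear term by Cauchy–Schwarz and
the quadratic term by the operator norm of `A₀` bounds `q₀ Ybar`, with `‖Ybar - Ych‖ = d_F(Ych)`. -/

lemma frob_eq_sqrt_sum {n m : ℕ} (M : Matrix (Fin n) (Fin m) ℝ) :
    frob M = √(∑ p : Fin n × Fin m, M p.1 p.2 ^ 2) := by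
  rw [frob, Fintype.sum_prod_type]

lemma trace_transpose_mul_eq_sum_s3 {n m : ℕ} (G D : Matrix (Fin n) (Fin m) ℝ) :
    (Gᵀ * D).trace = ∑ p : Fin n × Fin m, G p.1 p.2 * D p.1 p.2 := by
  rw [Fintype.sum_prod_type, Finset.sum_comm]
  simp [Matrix.trace, Matrix.mul_apply]

lemma trace_transpose_mul_le_frob {n m : ℕ} (G D : Matrix (Fin n) (Fin m) ℝ) :
    (Gᵀ * D).trace ≤ frob G * frob D := by
  rw [trace_transpose_mul_eq_sum_s3, frob_eq_sqrt_sum, frob_eq_sqrt_sum]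
  exact Real.sum_mul_le_sqrt_mul_sqrt _ _ _

lemma dotProduct_mulVec_self_le {ι : Type*} [Fintype ι] [DecidableEq ι]
    (A : Matrix ι ι ℝ) (x : ι → ℝ) :
    x ⬝ᵥ A *ᵥ x ≤ ‖Matrix.toEuclideanCLM (𝕜 := ℝ) A‖ * (x ⬝ᵥ x) := by
  set T := Matrix.toEuclideanCLM (𝕜 := ℝ) A
  set v : EuclideanSpace ℝ ι := WithLp.toLp 2 x
  have hv : ‖v‖ ^ 2 = x ⬝ᵥ x := by
    rw [← real_inner_self_eq_norm_sq, EuclideanSpace.inner_toLp_toLp, star_trivial]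
  calc x ⬝ᵥ A *ᵥ x = inner ℝ v (T v) := (Matrix.inner_toEuclideanCLM A v v).symm
    _ ≤ ‖v‖ * ‖T v‖ := real_inner_le_norm _ _
    _ ≤ ‖v‖ * (‖T‖ * ‖v‖) := by gcongr; exact T.le_opNorm v
    _ = ‖T‖ * (x ⬝ᵥ x) := by rw [← hv]; ring

lemma trace_transpose_mul_mul_le {n m : ℕ} (A : Matrix (Fin n) (Fin n) ℝ)
    (D : Matrix (Fin n) (Fin m) ℝ) :
    (Dᵀ * A * D).trace ≤ spec A * frob D ^ 2 := by
  have hcols : (Dᵀ * A * D).trace = ∑ j, Dᵀ j ⬝ᵥ A *ᵥ Dᵀ j := by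
    rw [Matrix.mul_assoc]
    simp only [Matrix.trace, Matrix.diag, Matrix.mul_apply']
    rfl
  have hfrob : frob D ^ 2 = ∑ j, Dᵀ j ⬝ᵥ Dᵀ j := by
    rw [frob, Real.sq_sqrt (by positivity), Finset.sum_comm]
    simp [dotProduct, sq]
  rw [hcols, hfrob, Finset.mul_sum]
  exact Finset.sum_le_sum fun j _ => dotProduct_mulVec_self_le A (Dᵀ j)

lemma quadF_add {n m : ℕ} {A : Matrix (Fin n) (Fin n) ℝ} (hA : A.IsSymm)
    (B : Matrix (Fin n) (Fin m) ℝ) (c : ℝ) (Y D : Matrix (Fin n) (Fin m) ℝ) :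
    quadF A B c (Y + D) =
      quadF A B c Y + ((gradF A B Y)ᵀ * D).trace + (Dᵀ * A * D).trace := by
  have hcross : (Yᵀ * A * D).trace = (Dᵀ * A * Y).trace := by
    rw [← Matrix.trace_transpose, Matrix.transpose_mul, Matrix.transpose_mul,
      Matrix.transpose_transpose, hA.eq, Matrix.mul_assoc]
  simp only [quadF, gradF, Matrix.transpose_add, Matrix.transpose_smul, Matrix.add_mul,
    Matrix.mul_add, Matrix.smul_mul, Matrix.trace_add, Matrix.trace_smul, smul_eq_mul,
    Matrix.transpose_mul, hA.eq, hcross]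
  ring

lemma quadF_add_le {n m : ℕ} {A : Matrix (Fin n) (Fin n) ℝ} (hA : A.IsSymm)
    (B : Matrix (Fin n) (Fin m) ℝ) (c : ℝ) (Y D : Matrix (Fin n) (Fin m) ℝ) :
    quadF A B c (Y + D) ≤
      quadF A B c Y + frob (gradF A B Y) * frob D + spec A * frob D ^ 2 := by
  rw [quadF_add hA]
  gcongr
  · exact trace_transpose_mul_le_frob _ _
  · exact trace_transpose_mul_mul_le _ _

lemma distF_le_frob_sub {n m : ℕ} {F : Set (Matrix (Fin n) (Fin m) ℝ)}
    {Y : Matrix (Fin n) (Fin m) ℝ} (hY : Y ∈ F) (Z : Matrix (Fin n) (Fin m) ℝ) :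
    distF F Z ≤ frob (Y - Z) :=
  csInf_le ⟨0, by rintro r ⟨Y', _, rfl⟩; exact Real.sqrt_nonneg _⟩ ⟨Y, hY, rfl⟩

theorem proximal_minimizer_objective_bound_general {n m : ℕ}
    (F : Set (Matrix (Fin n) (Fin m) ℝ))
    (A₀ : Matrix (Fin n) (Fin n) ℝ) (hA₀ : A₀.IsSymm)
    (B₀ : Matrix (Fin n) (Fin m) ℝ) (c₀ : ℝ)
    (Ych : Matrix (Fin n) (Fin m) ℝ) (η : ℝ) (hη : 0 < η)
    (Yst : Matrix (Fin n) (Fin m) ℝ) (hYst : Yst ∈ F)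
    (Ybar : Matrix (Fin n) (Fin m) ℝ) (hYbar : Ybar ∈ F)
    (hclosest : frob (Ybar - Ych) = distF F Ych)
    (hmin : ∀ Y ∈ F, quadF A₀ B₀ c₀ Yst + η * (frob (Yst - Ych)) ^ 2 ≤
      quadF A₀ B₀ c₀ Y + η * (frob (Y - Ych)) ^ 2) :
    quadF A₀ B₀ c₀ Yst ≤ quadF A₀ B₀ c₀ Ych +
      frob (gradF A₀ B₀ Ych) * distF F Ych + spec A₀ * (distF F Ych) ^ 2 := by
  have hpenalty : η * frob (Ybar - Ych) ^ 2 ≤ η * frob (Yst - Ych) ^ 2 := by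
    gcongr
    · exact Real.sqrt_nonneg _
    · exact hclosest ▸ distF_le_frob_sub hYst Ych
  have hcompare := hmin Ybar hYbar
  calc quadF A₀ B₀ c₀ Yst ≤ quadF A₀ B₀ c₀ (Ych + (Ybar - Ych)) := by
        rw [add_sub_cancel]; linarith
    _ ≤ _ := hclosest ▸ quadF_add_le hA₀ B₀ c₀ Ych (Ybar - Ych)

theorem proximal_minimizer_objective_bound {n m : ℕ}
    (F : Set (Matrix (Fin n) (Fin m) ℝ)) (hFne : F.Nonempty) (hFcl : IsClosed F)
    (A₀ : Matrix (Fin n) (Fin n) ℝ) (hA₀ : A₀.IsSymm)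
    (B₀ : Matrix (Fin n) (Fin m) ℝ) (c₀ : ℝ)
    (Ych : Matrix (Fin n) (Fin m) ℝ) (η : ℝ) (hη : 0 < η) (hη' : spec A₀ < η)
    (Yst : Matrix (Fin n) (Fin m) ℝ) (hYst : Yst ∈ F)
    (Ybar : Matrix (Fin n) (Fin m) ℝ) (hYbar : Ybar ∈ F)
    (hclosest : frob (Ybar - Ych) = distF F Ych)
    (hmin : ∀ Y ∈ F, quadF A₀ B₀ c₀ Yst + η * (frob (Yst - Ych)) ^ 2 ≤
      quadF A₀ B₀ c₀ Y + η * (frob (Y - Ych)) ^ 2) :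
    quadF A₀ B₀ c₀ Yst ≤ quadF A₀ B₀ c₀ Ych +
      frob (gradF A₀ B₀ Ych) * distF F Ych + spec A₀ * (distF F Ych) ^ 2 :=
  proximal_minimizer_objective_bound_general F A₀ hA₀ B₀ c₀ Ych η hη Yst hYst Ybar hYbar hclosest
    hmin
end

section
/- Let q_k(Y) = tr(Yᵀ A_k Y) + 2 tr(B_kᵀ Y) + c_k for k in a finite index set Q, with gradients ∇q_k(Y) = 2(A_k Y + B_k). Define the Jacobian J_Q(Y) whose rows are vec(∇q_k(Y))ᵀ for k ∈ Q, and the pencil norm ρ₂ = max{‖Σ_{k∈Q} τ_k A_k‖₂ : ‖τ‖₂ = 1}. Then for any Y₁, Y₂ ∈ ℝ^{n×m}, σ_min(J_Q(Y₂)) ≥ σ_min(J_Q(Y₁)) − 2 ρ₂ ‖Y₁ − Y₂‖_F, where σ_min denotes the smallest singular value (set to 0 if |Q| > nm). -/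
open Matrix Finset

/-! For every unit vector `ξ`, `J(Y₁)ᵀξ - J(Y₂)ᵀξ = 2 vec((∑ ξₖ Aₖ)(Y₁ - Y₂))`: the `Bₖ` cancel and
the Jacobian is affine in `Y`. Its norm is at most `2 ‖∑ ξₖ Aₖ‖₂ ‖Y₁ - Y₂‖_F ≤ 2 ρ₂ ‖Y₁ - Y₂‖_F`,
so taking the infimum over `ξ` moves `σ_min` by at most that much. -/

section Euclidean

variable {ι : Type*} [Fintype ι]

lemma euc_eq_norm_toLp (x : ι → ℝ) : euc x = ‖WithLp.toLp 2 x‖ := by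
  simp [euc, EuclideanSpace.norm_eq]

lemma euc_nonneg (x : ι → ℝ) : 0 ≤ euc x := Real.sqrt_nonneg _

lemma euc_sq (x : ι → ℝ) : euc x ^ 2 = ∑ i, x i ^ 2 :=
  Real.sq_sqrt (Finset.sum_nonneg fun _ _ => sq_nonneg _)

lemma euc_add_le (x y : ι → ℝ) : euc (x + y) ≤ euc x + euc y := by
  simpa only [euc_eq_norm_toLp, WithLp.toLp_add] using
    norm_add_le (WithLp.toLp 2 x) (WithLp.toLp 2 y)

lemma euc_smul (c : ℝ) (x : ι → ℝ) : euc (c • x) = |c| * euc x := by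
  rw [euc_eq_norm_toLp, euc_eq_norm_toLp, WithLp.toLp_smul, norm_smul, Real.norm_eq_abs]

lemma abs_le_euc (x : ι → ℝ) (i : ι) : |x i| ≤ euc x := by
  simpa only [euc_eq_norm_toLp, Real.norm_eq_abs] using
    PiLp.norm_apply_le (WithLp.toLp 2 x) i

end Euclidean

section Spectral

variable {n m : ℕ}

lemma euc_mulVec_le (A : Matrix (Fin n) (Fin n) ℝ) (v : Fin n → ℝ) :
    euc (A *ᵥ v) ≤ spec A * euc v := by
  simpa only [spec, euc_eq_norm_toLp, toEuclideanCLM_toLp] using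
    (toEuclideanCLM (𝕜 := ℝ) A).le_opNorm (WithLp.toLp 2 v)

lemma euc_uncurry_eq_frob (M : Matrix (Fin n) (Fin m) ℝ) :
    euc (fun p : Fin n × Fin m => M p.1 p.2) = frob M := by
  simp [euc, frob, Fintype.sum_prod_type]

/-- Apply the operator-norm bound to each column and sum the squares. -/
lemma frob_mul_le (A : Matrix (Fin n) (Fin n) ℝ) (M : Matrix (Fin n) (Fin m) ℝ) :
    frob (A * M) ≤ spec A * frob M := by
  have hcol : ∀ j, ∑ i, (A * M) i j ^ 2 ≤ spec A ^ 2 * ∑ i, M i j ^ 2 := fun j => by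
    rw [← euc_sq, ← euc_sq, ← mul_pow]
    exact pow_le_pow_left₀ (euc_nonneg _) (euc_mulVec_le A fun i => M i j) 2
  have hsq : ∑ i, ∑ j, (A * M) i j ^ 2 ≤ spec A ^ 2 * ∑ i, ∑ j, M i j ^ 2 := by
    rw [Finset.sum_comm, Finset.sum_comm (f := fun i j => M i j ^ 2), Finset.mul_sum]
    exact Finset.sum_le_sum fun j _ => hcol j
  calc frob (A * M) ≤ Real.sqrt (spec A ^ 2 * ∑ i, ∑ j, M i j ^ 2) := Real.sqrt_le_sqrt hsq
    _ = spec A * frob M := by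
      rw [Real.sqrt_mul (sq_nonneg _), Real.sqrt_sq (spec_nonneg A), frob]

lemma spec_sum_smul_le {Q : Type*} [Fintype Q] (A : Q → Matrix (Fin n) (Fin n) ℝ)
    (τ : Q → ℝ) : spec (∑ k, τ k • A k) ≤ euc τ * ∑ k, spec (A k) := by
  rw [Finset.mul_sum]
  refine (norm_sum_le_of_le _ fun k _ => ?_).trans_eq' (by rw [spec, map_sum])
  rw [map_smul, norm_smul, Real.norm_eq_abs]
  exact mul_le_mul_of_nonneg_right (abs_le_euc τ k) (spec_nonneg _)

lemma bddAbove_spec_pencil {Q : Type*} [Fintype Q] (A : Q → Matrix (Fin n) (Fin n) ℝ) :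
    BddAbove {r | ∃ τ : Q → ℝ, euc τ = 1 ∧ r = spec (∑ k, τ k • A k)} := by
  refine ⟨∑ k, spec (A k), ?_⟩
  rintro _ ⟨τ, hτ, rfl⟩
  simpa [hτ] using spec_sum_smul_le A τ

end Spectral

lemma sigMin_sub_le {ι κ : Type*} [Fintype ι] [Fintype κ] {J₁ J₂ : Matrix ι κ ℝ} {ε : ℝ}
    (hε : 0 ≤ ε) (h : ∀ ξ : ι → ℝ, euc ξ = 1 → euc (J₁ᵀ *ᵥ ξ) ≤ euc (J₂ᵀ *ᵥ ξ) + ε) :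
    sigMin J₁ - ε ≤ sigMin J₂ := by
  by_cases hunit : ∃ ξ : ι → ℝ, euc ξ = 1
  · obtain ⟨ξ₀, hξ₀⟩ := hunit
    refine le_csInf ⟨_, ξ₀, hξ₀, rfl⟩ ?_
    rintro _ ⟨ξ, hξ, rfl⟩
    have hbdd : BddBelow {r | ∃ ξ : ι → ℝ, euc ξ = 1 ∧ r = euc (J₁ᵀ *ᵥ ξ)} :=
      ⟨0, by rintro _ ⟨ξ, -, rfl⟩; exact euc_nonneg _⟩
    have hmin : sigMin J₁ ≤ euc (J₁ᵀ *ᵥ ξ) := csInf_le hbdd ⟨ξ, hξ, rfl⟩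
    linarith [h ξ hξ]
  · -- no unit vectors (`ι` empty): both `sigMin`s are the junk value `sInf ∅ = 0`
    push Not at hunit
    simp [sigMin, hunit, hε]

lemma jacobian_transpose_mulVec_eq_add {n m : ℕ} {Q : Type*} [Fintype Q]
    (A : Q → Matrix (Fin n) (Fin n) ℝ) (B : Q → Matrix (Fin n) (Fin m) ℝ)
    (Y₁ Y₂ : Matrix (Fin n) (Fin m) ℝ) (ξ : Q → ℝ) :
    (of fun (k : Q) (p : Fin n × Fin m) => (2 : ℝ) * ((A k * Y₁ + B k) p.1 p.2))ᵀ *ᵥ ξ =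
      (of fun (k : Q) (p : Fin n × Fin m) => (2 : ℝ) * ((A k * Y₂ + B k) p.1 p.2))ᵀ *ᵥ ξ +
      (2 : ℝ) • fun p : Fin n × Fin m => ((∑ k, ξ k • A k) * (Y₁ - Y₂)) p.1 p.2 := by
  ext p
  simp only [Pi.add_apply, Pi.smul_apply, smul_eq_mul, mulVec, dotProduct, transpose_apply,
    of_apply, Matrix.sum_mul, Matrix.sum_apply, smul_mul, Matrix.mul_sub, Matrix.smul_apply,
    Matrix.sub_apply, Matrix.add_apply]
  rw [← Finset.sum_sub_distrib, Finset.mul_sum, ← Finset.sum_add_distrib]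
  exact Finset.sum_congr rfl fun k _ => by ring

theorem jacobian_sigma_min_perturbation_general {n m K : ℕ}
    (A : Fin K → Matrix (Fin n) (Fin n) ℝ)
    (B : Fin K → Matrix (Fin n) (Fin m) ℝ)
    (ρ₂ : ℝ)
    (hρ₂ : ρ₂ = sSup {r | ∃ τ : Fin K → ℝ, euc τ = 1 ∧ r = spec (∑ k, τ k • A k)})
    (Y₁ Y₂ : Matrix (Fin n) (Fin m) ℝ) :
    sigMin (Matrix.of fun (k : Fin K) (p : Fin n × Fin m) =>
        (2 : ℝ) * ((A k * Y₁ + B k) p.1 p.2)) - 2 * ρ₂ * frob (Y₁ - Y₂) ≤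
      sigMin (Matrix.of fun (k : Fin K) (p : Fin n × Fin m) =>
        (2 : ℝ) * ((A k * Y₂ + B k) p.1 p.2)) := by
  have hρ₂_nonneg : 0 ≤ ρ₂ :=
    hρ₂ ▸ Real.sSup_nonneg (by rintro _ ⟨τ, -, rfl⟩; exact spec_nonneg _)
  refine sigMin_sub_le (mul_nonneg (by positivity) (frob_nonneg _)) fun ξ hξ => ?_
  have hpencil : spec (∑ k, ξ k • A k) ≤ ρ₂ :=
    hρ₂ ▸ le_csSup (bddAbove_spec_pencil A) ⟨ξ, hξ, rfl⟩
  rw [jacobian_transpose_mulVec_eq_add]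
  refine (euc_add_le _ _).trans ?_
  rw [euc_smul, euc_uncurry_eq_frob, abs_two, mul_assoc]
  gcongr
  exact (frob_mul_le _ _).trans (mul_le_mul_of_nonneg_right hpencil (frob_nonneg _))

theorem jacobian_sigma_min_perturbation {n m K : ℕ} (hK : K ≤ n * m)
    (A : Fin K → Matrix (Fin n) (Fin n) ℝ) (hA : ∀ k, (A k).IsSymm)
    (B : Fin K → Matrix (Fin n) (Fin m) ℝ)
    (ρ₂ : ℝ)
    (hρ₂ : ρ₂ = sSup {r | ∃ τ : Fin K → ℝ, euc τ = 1 ∧ r = spec (∑ k, τ k • A k)})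
    (Y₁ Y₂ : Matrix (Fin n) (Fin m) ℝ) :
    sigMin (Matrix.of fun (k : Fin K) (p : Fin n × Fin m) =>
        (2 : ℝ) * ((A k * Y₁ + B k) p.1 p.2)) - 2 * ρ₂ * frob (Y₁ - Y₂) ≤
      sigMin (Matrix.of fun (k : Fin K) (p : Fin n × Fin m) =>
        (2 : ℝ) * ((A k * Y₂ + B k) p.1 p.2)) :=
  jacobian_sigma_min_perturbation_general A B ρ₂ hρ₂ Y₁ Y₂
end

section
/- Let Λ ∈ 𝕊_n be a symmetric matrix that is diagonally dominant with nonnegative diagonal entries, i.e., Λ_ii ≥ Σ_{j≠i} |Λ_ij| for all i. Then for any symmetric matrix M ∈ 𝕊_n satisfying the parabolic constraints M_ii + M_jj − 2M_ij ≥ 0 and M_ii + M_jj + 2M_ij ≥ 0 for all i, j (in particular M_ii ≥ 0 for all i), one has ⟨Λ, M⟩ = Σ_{i,j} Λ_ij M_ij ≥ 0. -/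
open Matrix Finset

theorem diag_dominant_inner_nonneg {n : ℕ}
    (Λ M : Matrix (Fin n) (Fin n) ℝ) (hΛs : Λ.IsSymm) (hMs : M.IsSymm)
    (hdd : ∀ i, ∑ j ∈ Finset.univ.erase i, |Λ i j| ≤ Λ i i)
    (hM : ∀ i j, 0 ≤ M i i + M j j - 2 * M i j ∧ 0 ≤ M i i + M j j + 2 * M i j) :
    0 ≤ ∑ i, ∑ j, Λ i j * M i j := by
  have hMd : ∀ i, 0 ≤ M i i := fun i => by have := (hM i i).2; linarith
  have habs : ∀ i j, |M i j| ≤ (M i i + M j j) / 2 := by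
    intro i j
    rw [abs_le]
    obtain ⟨h1, h2⟩ := hM i j
    constructor <;> linarith
  have hΛsym : ∀ i j, Λ i j = Λ j i := fun i j => Matrix.IsSymm.apply hΛs j i
  have step1 : ∀ i, Λ i i * M i i - ∑ j ∈ Finset.univ.erase i, |Λ i j| * (M i i + M j j) / 2
      ≤ ∑ j, Λ i j * M i j := by
    intro i
    rw [← Finset.add_sum_erase Finset.univ (fun j => Λ i j * M i j) (Finset.mem_univ i)]
    have hle : ∑ j ∈ Finset.univ.erase i, -(|Λ i j| * (M i i + M j j) / 2)
        ≤ ∑ j ∈ Finset.univ.erase i, Λ i j * M i j := by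
      apply Finset.sum_le_sum
      intro j _
      have h1 := habs i j
      have h2 : -(|Λ i j| * |M i j|) ≤ Λ i j * M i j := by
        rw [← abs_mul]; exact neg_abs_le _
      have h3 : |Λ i j| * |M i j| ≤ |Λ i j| * ((M i i + M j j) / 2) :=
        mul_le_mul_of_nonneg_left h1 (abs_nonneg _)
      linarith
    rw [Finset.sum_neg_distrib] at hle
    have : ∑ j ∈ Finset.univ.erase i, |Λ i j| * (M i i + M j j) / 2
        = ∑ j ∈ Finset.univ.erase i, |Λ i j| * ((M i i + M j j) / 2) := by
      apply Finset.sum_congr rfl; intros; ring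
    linarith [this]
  have swap : ∑ i, ∑ j ∈ Finset.univ.erase i, |Λ i j| * M j j
      = ∑ i, ∑ j ∈ Finset.univ.erase i, |Λ i j| * M i i := by
    rw [Finset.sum_comm' (t' := Finset.univ) (s' := fun y => Finset.univ.erase y)
      (by intro x y; simp [eq_comm, ne_comm, and_comm])]
    apply Finset.sum_congr rfl
    intro y _
    apply Finset.sum_congr rfl
    intro x _
    rw [hΛsym x y]
  have step2 : ∑ i, ∑ j ∈ Finset.univ.erase i, |Λ i j| * (M i i + M j j) / 2
      ≤ ∑ i, Λ i i * M i i := by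
    have expand : ∑ i, ∑ j ∈ Finset.univ.erase i, |Λ i j| * (M i i + M j j) / 2
        = (∑ i, ∑ j ∈ Finset.univ.erase i, |Λ i j| * M i i
          + ∑ i, ∑ j ∈ Finset.univ.erase i, |Λ i j| * M j j) / 2 := by
      rw [← Finset.sum_add_distrib]
      rw [Finset.sum_div]
      apply Finset.sum_congr rfl
      intro i _
      rw [← Finset.sum_add_distrib, Finset.sum_div]
      apply Finset.sum_congr rfl
      intros; ring
    rw [expand, swap]
    have : ∀ i, ∑ j ∈ Finset.univ.erase i, |Λ i j| * M i i ≤ Λ i i * M i i := by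
      intro i
      rw [← Finset.sum_mul]
      exact mul_le_mul_of_nonneg_right (hdd i) (hMd i)
    have h := Finset.sum_le_sum (s := Finset.univ) (fun i _ => this i)
    linarith
  have h := Finset.sum_le_sum (s := Finset.univ) (fun i _ => step1 i)
  rw [Finset.sum_sub_distrib] at h
  linarith [step2]
end
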